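/- If Φ : ℝ → ℝ is twice differentiable, satisfies D·Φ''(x) = sinh(Φ(x)), Φ(0) = 0, Φ'(0) = 0, and Φ(x) ≥ 0 with Φ' ≤ 0 on [x₀, 0] for some x₀ < 0, then Φ'(x) = −(2/√D)·sinh(Φ(x)/2) for all x in [x₀, 0]. -/

import Mathlib

/-! Multiplying `D Φ'' = sinh Φ` by `Φ'` gives the conserved energy `(D/2) Φ'² - (cosh Φ - 1)`,
which vanishes at `0`; hence `(D/2) Φ'² = cosh Φ - 1 = 2 sinh² (Φ/2)`, and the signs `Φ' ≤ 0`,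
`Φ ≥ 0` select the negative square root. -/

open Real

theorem energy_eq_of_hasDerivAt {D : ℝ} {G g Φ Φ' Φ'' : ℝ → ℝ}
    (hG : ∀ y, HasDerivAt G (g y) y) (hΦ : ∀ x, HasDerivAt Φ (Φ' x) x)
    (hΦ' : ∀ x, HasDerivAt Φ' (Φ'' x) x) (hODE : ∀ x, D * Φ'' x = g (Φ x)) (x y : ℝ) :
    D / 2 * Φ' x ^ 2 - G (Φ x) = D / 2 * Φ' y ^ 2 - G (Φ y) := by
  have hderiv : ∀ x, HasDerivAt (fun x ↦ D / 2 * Φ' x ^ 2 - G (Φ x)) 0 x := fun x ↦ by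
    refine ((((hΦ' x).pow 2).const_mul (D / 2)).sub ((hG (Φ x)).comp x (hΦ x))).congr_deriv ?_
    push_cast
    linear_combination Φ' x * hODE x
  exact is_const_of_deriv_eq_zero (fun x ↦ (hderiv x).differentiableAt)
    (fun x ↦ (hderiv x).deriv) x y

theorem Real.cosh_sub_one_eq_two_mul_sinh_half_sq (t : ℝ) :
    cosh t - 1 = 2 * sinh (t / 2) ^ 2 := by
  have h := cosh_two_mul (t / 2)
  rw [mul_div_cancel₀ t two_ne_zero, cosh_sq] at h
  linarith

theorem eq_neg_of_sq_eq_sq_of_nonpos_of_nonneg {R : Type*} [Ring R] [LinearOrder R]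
    [IsStrictOrderedRing R] {a b : R} (ha : a ≤ 0) (hb : 0 ≤ b)
    (h : a ^ 2 = b ^ 2) : a = -b := by
  rw [← neg_eq_iff_eq_neg, ← sq_eq_sq₀ (neg_nonneg.mpr ha) hb, neg_sq, h]

theorem pb_first_order_ode_general (D : ℝ) (hD : 0 < D) (x₀ : ℝ)
    (Φ Φ' Φ'' : ℝ → ℝ)
    (hΦ : ∀ x : ℝ, HasDerivAt Φ (Φ' x) x)
    (hΦ' : ∀ x : ℝ, HasDerivAt Φ' (Φ'' x) x)
    (hODE : ∀ x : ℝ, D * Φ'' x = Real.sinh (Φ x))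
    (hΦ0 : Φ 0 = 0) (hΦ'0 : Φ' 0 = 0)
    (hsign : ∀ x ∈ Set.Icc x₀ 0, 0 ≤ Φ x ∧ Φ' x ≤ 0) :
    ∀ x ∈ Set.Icc x₀ 0,
      Φ' x = -(2 / Real.sqrt D) * Real.sinh (Φ x / 2) := by
  intro x hx
  obtain ⟨hΦx, hΦ'x⟩ := hsign x hx
  have henergy : D / 2 * Φ' x ^ 2 = 2 * sinh (Φ x / 2) ^ 2 := by
    have h := energy_eq_of_hasDerivAt hasDerivAt_cosh hΦ hΦ' hODE x 0
    rw [hΦ0, hΦ'0, cosh_zero] at h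
    linarith [cosh_sub_one_eq_two_mul_sinh_half_sq (Φ x)]
  have hsqrt : sqrt D ^ 2 = D := sq_sqrt hD.le
  rw [neg_mul]
  refine eq_neg_of_sq_eq_sq_of_nonpos_of_nonneg hΦ'x
    (mul_nonneg (by positivity) (sinh_nonneg_iff.mpr (by linarith))) ?_
  field_simp
  linear_combination 2 * henergy + Φ' x ^ 2 * hsqrt

/-- If `D Φ'' = sinh Φ`, `Φ 0 = 0`, `Φ' 0 = 0`, and `Φ ≥ 0`, `Φ' ≤ 0` on `[x₀, 0]`,
then `Φ' x = −(2/√D) sinh (Φ x / 2)` on `[x₀, 0]`. -/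
theorem pb_first_order_ode (D : ℝ) (hD : 0 < D) (x₀ : ℝ) (hx₀ : x₀ < 0)
    (Φ Φ' Φ'' : ℝ → ℝ)
    (hΦ : ∀ x : ℝ, HasDerivAt Φ (Φ' x) x)
    (hΦ' : ∀ x : ℝ, HasDerivAt Φ' (Φ'' x) x)
    (hODE : ∀ x : ℝ, D * Φ'' x = Real.sinh (Φ x))
    (hΦ0 : Φ 0 = 0) (hΦ'0 : Φ' 0 = 0)
    (hsign : ∀ x ∈ Set.Icc x₀ 0, 0 ≤ Φ x ∧ Φ' x ≤ 0) :
    ∀ x ∈ Set.Icc x₀ 0,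
      Φ' x = -(2 / Real.sqrt D) * Real.sinh (Φ x / 2) :=
  pb_first_order_ode_general D hD x₀ Φ Φ' Φ'' hΦ hΦ' hODE hΦ0 hΦ'0 hsign
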